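/- Let π ∈ S_n be a separable permutation. The map φ′ : Λ_π × V_π → S_n defined by φ′(u, v) = v⁻¹u, for u ≤ π and v ≥ π in weak order, is a bijection. -/

import Mathlib

/-!
Encode the weak order by inversion sets of letters: `u ≤ v` iff every pair of letters `a < b`
that `u` puts in reverse order is reversed by `v` too. Writing `u = v * w`, the pair `(u, v)` lies
in `Λ_π × V_π` iff `F = v⁻¹` reverses every pair of letters reversed by `π` and, followed by `w⁻¹`,
keeps in order every pair kept in order by `π`. So the theorem says that such an injective `F`
exists and is unique.

This is proved for any injective sequence `y` avoiding 2413 and 3142 (in the role of `π⁻¹`) and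
any two injective orderings `s`, `t` of the target (in the roles of `id` and `w⁻¹`). Such a `y` of
length at least two is a skew or a direct sum of two shorter ones. In a skew sum every cross pair
is reversed, so `F` must map the first block onto the `s`-upper cut of that size, which is unique,
and the problem splits into two smaller ones of the same kind. Reversing all three orders turns a
direct sum into a skew sum.
-/
open Polynomial

namespace SepPerm

/-- The length (number of inversions) of a permutation of `Fin n`. -/
def invCount {n : ℕ} (π : Equiv.Perm (Fin n)) : ℕ :=
  (Finset.univ.filter fun p : Fin n × Fin n => p.1 < p.2 ∧ π p.2 < π p.1).card

/-- The (right) weak Bruhat order: `u ≤ v` iff `ℓ(u) + ℓ(u⁻¹v) = ℓ(v)`. -/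
def wle {n : ℕ} (u v : Equiv.Perm (Fin n)) : Prop :=
  invCount u + invCount (u⁻¹ * v) = invCount v

open scoped Classical in
/-- `F(Λ_π, q) = ∑_{u ≤ π} q^{ℓ(u)}`, rank generating function of `[id, π]`. -/
noncomputable def FLam {n : ℕ} (π : Equiv.Perm (Fin n)) : Polynomial ℤ :=
  ∑ u ∈ Finset.univ.filter (fun u => wle u π), X ^ invCount u

open scoped Classical in
/-- `F(V_π, q) = ∑_{v ≥ π} q^{ℓ(v) - ℓ(π)}`, rank generating function of `[π, w₀]`. -/
noncomputable def FV {n : ℕ} (π : Equiv.Perm (Fin n)) : Polynomial ℤ :=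
  ∑ v ∈ Finset.univ.filter (fun v => wle π v), X ^ (invCount v - invCount π)

/-- A permutation is separable iff it avoids the patterns 3142 and 2413. -/
def IsSeparable {n : ℕ} (π : Equiv.Perm (Fin n)) : Prop :=
  (¬ ∃ i j k h : Fin n, i < j ∧ j < k ∧ k < h ∧
      π j < π h ∧ π h < π i ∧ π i < π k) ∧
  (¬ ∃ i j k h : Fin n, i < j ∧ j < k ∧ k < h ∧
      π k < π i ∧ π i < π h ∧ π h < π j)

/-- The longest element `w₀ = n, n-1, …, 1`. -/
def w0 (n : ℕ) : Equiv.Perm (Fin n) := Fin.revPerm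

/-- The complement `π^c`, with `π^c(i) = n + 1 - π(i)` (one-indexed). -/
def compl {n : ℕ} (π : Equiv.Perm (Fin n)) : Equiv.Perm (Fin n) := w0 n * π

/-- `[k] = 1 + q + ⋯ + q^{k-1}`. -/
noncomputable def qnum (k : ℕ) : Polynomial ℤ := ∑ i ∈ Finset.range k, X ^ i

/-- `[N]! = [1][2]⋯[N]`. -/
noncomputable def qfact (N : ℕ) : Polynomial ℤ := ∏ k ∈ Finset.range N, qnum (k + 1)

/-- The inversion poset `P_π` on the letters: `x ≤_P y` iff `x ≤ y` and `π⁻¹x ≤ π⁻¹y`. -/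
def invLe {n : ℕ} (π : Equiv.Perm (Fin n)) (x y : Fin n) : Prop :=
  x ≤ y ∧ π⁻¹ x ≤ π⁻¹ y

/-- `σ` is a linear extension of the order `r`: whenever `i <_r j`, `i` precedes `j`
in the one-line notation of `σ` (i.e. the position `σ⁻¹ i` comes before `σ⁻¹ j`). -/
def IsLinExt {N : ℕ} (r : Fin N → Fin N → Prop) (σ : Equiv.Perm (Fin N)) : Prop :=
  ∀ i j, r i j → i ≠ j → σ.symm i < σ.symm j

open scoped Classical in
/-- `F(𝓛(P), q) = ∑_{σ ∈ 𝓛(P)} q^{ℓ(σ)}`, generating function of linear extensions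
by number of inversions. -/
noncomputable def FLin {N : ℕ} (r : Fin N → Fin N → Prop) : Polynomial ℤ :=
  ∑ σ ∈ Finset.univ.filter (fun σ => IsLinExt r σ), X ^ invCount σ

open Finset Equiv Function
open scoped symmDiff

variable {n : ℕ}

def invSet (σ : Perm (Fin n)) : Finset (Fin n × Fin n) :=
  {p | p.1 < p.2 ∧ σ⁻¹ p.2 < σ⁻¹ p.1}

theorem mem_invSet {σ : Perm (Fin n)} {p : Fin n × Fin n} :
    p ∈ invSet σ ↔ p.1 < p.2 ∧ σ⁻¹ p.2 < σ⁻¹ p.1 := by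
  simp [invSet]

theorem invCount_inv_mul (u v : Perm (Fin n)) :
    invCount (v⁻¹ * u) = #(invSet u ∆ invSet v) := by
  -- sort the letters `u i`, `u j`: the inversions of `v⁻¹ * u` are the pairs of letters
  -- that `u⁻¹` and `v⁻¹` order differently
  have hu : ∀ a, u⁻¹ (u a) = a := by simp
  have hu' : ∀ a, u (u⁻¹ a) = a := by simp
  refine card_bij' (fun p _ => (min (u p.1) (u p.2), max (u p.1) (u p.2)))
    (fun q _ => (min (u⁻¹ q.1) (u⁻¹ q.2), max (u⁻¹ q.1) (u⁻¹ q.2))) ?_ ?_ ?_ ?_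
  · intro p h
    obtain ⟨-, h1, h2⟩ := mem_filter.1 h
    rw [Perm.mul_apply, Perm.mul_apply] at h2
    rw [mem_symmDiff, mem_invSet, mem_invSet]
    have := u.injective.ne h1.ne
    grind
  · intro q h
    rw [mem_symmDiff, mem_invSet, mem_invSet] at h
    rw [mem_filter, Perm.mul_apply, Perm.mul_apply]
    have hq : q.1 ≠ q.2 := by grind
    have := v⁻¹.injective.ne hq
    have := u⁻¹.injective.ne hq
    grind
  · intro p h
    obtain ⟨-, h1, h2⟩ := mem_filter.1 h
    have := u.injective.ne h1.ne
    grind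
  · intro q h
    rw [mem_symmDiff, mem_invSet, mem_invSet] at h
    have : u⁻¹ q.1 ≠ u⁻¹ q.2 := u⁻¹.injective.ne (by grind)
    grind

theorem invSet_one : invSet (1 : Perm (Fin n)) = ∅ := by
  ext p
  simp only [mem_invSet, inv_one, Perm.one_apply, notMem_empty, iff_false, not_and]
  exact fun h => h.not_gt

theorem invCount_eq_card_invSet (σ : Perm (Fin n)) : invCount σ = #(invSet σ) := by
  have := invCount_inv_mul σ 1
  rwa [inv_one, one_mul, invSet_one, ← bot_eq_empty, symmDiff_bot] at this

theorem card_add_card_symmDiff_eq_iff {α : Type*} [DecidableEq α] (A B : Finset α) :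
    #A + #(B ∆ A) = #B ↔ A ⊆ B := by
  rw [symmDiff_def, sup_eq_union, card_union_of_disjoint disjoint_sdiff_sdiff,
    ← sdiff_eq_empty_iff_subset, ← card_eq_zero]
  have := card_sdiff_add_card_inter A B
  have := card_sdiff_add_card_inter B A
  rw [inter_comm] at this
  omega

theorem wle_iff_subset {u v : Perm (Fin n)} : wle u v ↔ invSet u ⊆ invSet v := by
  rw [wle, invCount_inv_mul, invCount_eq_card_invSet, invCount_eq_card_invSet,
    card_add_card_symmDiff_eq_iff]

theorem wle_iff {u v : Perm (Fin n)} :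
    wle u v ↔ ∀ a b, a < b → u⁻¹ b < u⁻¹ a → v⁻¹ b < v⁻¹ a := by
  simp only [wle_iff_subset, subset_iff, mem_invSet, Prod.forall]
  exact forall₂_congr fun a b =>
    ⟨fun h hab hu => (h ⟨hab, hu⟩).2, fun h hp => ⟨hp.1, h hp.1 hp.2⟩⟩

theorem wle_iff' {u v : Perm (Fin n)} :
    wle u v ↔ ∀ a b, a < b → v⁻¹ a < v⁻¹ b → u⁻¹ a < u⁻¹ b := by
  rw [wle_iff]
  refine forall₂_congr fun a b => imp_congr_right fun hab => ?_
  rw [← not_imp_not, not_lt, not_lt, (v⁻¹.injective.ne hab.ne).le_iff_lt,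
    (u⁻¹.injective.ne hab.ne).le_iff_lt]

section Patterns

variable {ι α : Type*}

def IsSeparableSeq [LT ι] [LT α] (y : ι → α) : Prop :=
  (¬ ∃ i j k h : ι, i < j ∧ j < k ∧ k < h ∧ y j < y h ∧ y h < y i ∧ y i < y k) ∧
  (¬ ∃ i j k h : ι, i < j ∧ j < k ∧ k < h ∧ y k < y i ∧ y i < y h ∧ y h < y j)

theorem IsSeparableSeq.comp_strictMono [Preorder ι] [LT α] {ι' : Type*} [Preorder ι']
    {y : ι → α} (hy : IsSeparableSeq y) {f : ι' → ι} (hf : StrictMono f) :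
    IsSeparableSeq (y ∘ f) :=
  ⟨fun ⟨i, j, k, h, hij, hjk, hkh, hy'⟩ =>
    hy.1 ⟨f i, f j, f k, f h, hf hij, hf hjk, hf hkh, hy'⟩,
   fun ⟨i, j, k, h, hij, hjk, hkh, hy'⟩ =>
    hy.2 ⟨f i, f j, f k, f h, hf hij, hf hjk, hf hkh, hy'⟩⟩

theorem IsSeparableSeq.toDual [LT ι] [LT α] {y : ι → α} (hy : IsSeparableSeq y) :
    IsSeparableSeq (OrderDual.toDual ∘ y) :=
  ⟨fun ⟨i, j, k, h, hij, hjk, hkh, h₁, h₂, h₃⟩ =>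
    hy.2 ⟨i, j, k, h, hij, hjk, hkh, h₃, h₂, h₁⟩,
   fun ⟨i, j, k, h, hij, hjk, hkh, h₁, h₂, h₃⟩ =>
    hy.1 ⟨i, j, k, h, hij, hjk, hkh, h₃, h₂, h₁⟩⟩

end Patterns

theorem IsSeparable.inv {π : Perm (Fin n)} (hπ : IsSeparable π) : IsSeparableSeq ⇑π⁻¹ := by
  refine ⟨fun ⟨i, j, k, h, hij, hjk, hkh, h₁, h₂, h₃⟩ => hπ.2 ?_,
    fun ⟨i, j, k, h, hij, hjk, hkh, h₁, h₂, h₃⟩ => hπ.1 ?_⟩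
  all_goals refine ⟨_, _, _, _, h₁, h₂, h₃, ?_, ?_, ?_⟩ <;> simpa

section SkewSum

variable {α : Type*} [LinearOrder α] {k : ℕ}

def IsSkewSumAt {N : ℕ} (y : Fin N → α) (m : ℕ) : Prop :=
  ∀ i j : Fin N, (i : ℕ) < m → m ≤ (j : ℕ) → y j < y i

variable {y : Fin (k + 1) → α} {M : ℕ}

theorem IsSeparableSeq.succ_lt_zero_of_lt (hy : Injective y) (hsep : IsSeparableSeq y)
    (hM : 0 < M) (htail : IsSkewSumAt (y ∘ Fin.succ) M) {r j : Fin k} (hMr : M ≤ (r : ℕ))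
    (hrj : r < j) (hr : y r.succ < y 0) : y j.succ < y 0 := by
  refine (le_of_not_gt fun hj => hsep.2 ?_).lt_of_ne (hy.ne (Fin.succ_ne_zero j))
  -- the entries at positions `0, 1, r + 1, j + 1` would form the pattern 2413
  refine ⟨0, Fin.succ ⟨0, by omega⟩, r.succ, j.succ, Fin.succ_pos _, ?_,
    Fin.succ_lt_succ_iff.2 hrj, hr, hj, htail _ j (by dsimp only; omega) ?_⟩
  · exact Fin.succ_lt_succ_iff.2 (Fin.lt_def.2 (by dsimp only; omega))
  · rw [Fin.lt_def] at hrj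
    omega

theorem exists_isSkewSumAt_of_tail (hy : Injective y) (hsep : IsSeparableSeq y) (hM : 0 < M)
    (hMk : M < k) (htail : IsSkewSumAt (y ∘ Fin.succ) M) :
    ∃ m, 0 < m ∧ m < k + 1 ∧ (IsSkewSumAt y m ∨ IsSkewSumAt (OrderDual.toDual ∘ y) m) := by
  have hne : ∀ j : Fin k, y j.succ ≠ y 0 := fun j => hy.ne (Fin.succ_ne_zero j)
  by_cases hA : ∀ j : Fin k, y 0 < y j.succ
  · refine ⟨1, one_pos, by omega, Or.inr fun i j hi hj => ?_⟩
    cases j using Fin.cases with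
    | zero => simp at hj
    | succ j =>
      cases i using Fin.cases with
      | zero => exact hA j
      | succ i => simp at hi
  by_cases hB : ∀ j : Fin k, M ≤ (j : ℕ) → y j.succ < y 0
  · refine ⟨M + 1, by omega, by omega, Or.inl fun i j hi hj => ?_⟩
    cases j using Fin.cases with
    | zero => simp at hj
    | succ j =>
      cases i using Fin.cases with
      | zero => exact hB j (by simpa using hj)
      | succ i => exact htail i j (by simpa using hi) (by simpa using hj)
  push Not at hA hB
  obtain ⟨j₁, hj₁⟩ := hA
  obtain ⟨jp, hjpM, hjp⟩ := hB
  obtain ⟨r, hr, hrmin⟩ := (univ.filter fun j : Fin k => y j.succ < y 0).exists_min_image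
    id ⟨j₁, by simpa using (hj₁.lt_of_ne (hne j₁))⟩
  simp only [mem_filter_univ, id] at hr hrmin
  have hrM : M ≤ (r : ℕ) := by
    by_contra h
    exact (htail r jp (by omega) hjpM).not_gt (hr.trans ((hjp.lt_of_ne (hne jp).symm)))
  have habove : ∀ i : Fin k, i < r → y 0 < y i.succ := fun i hi =>
    (not_lt.1 fun h => (hrmin i h).not_gt hi).lt_of_ne (hne i).symm
  refine ⟨r + 1, by omega, by omega, Or.inl fun i j hi hj => ?_⟩
  cases j using Fin.cases with
  | zero => simp at hj
  | succ j =>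
    have hj : y j.succ < y 0 := by
      rcases (Fin.le_def.2 (by simpa using hj) : r ≤ j).lt_or_eq with hrj | rfl
      · exact hsep.succ_lt_zero_of_lt hy hM htail hrM hrj hr
      · exact hr
    cases i using Fin.cases with
    | zero => exact hj
    | succ i => exact hj.trans (habove i (Fin.lt_def.2 (by simpa using hi)))

theorem IsSeparableSeq.exists_isSkewSumAt {N : ℕ} (hN : 2 ≤ N) {y : Fin N → α}
    (hy : Injective y) (hsep : IsSeparableSeq y) :
    ∃ m, 0 < m ∧ m < N ∧ (IsSkewSumAt y m ∨ IsSkewSumAt (OrderDual.toDual ∘ y) m) := by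
  induction N, hN using Nat.le_induction generalizing α with
  | base =>
    refine ⟨1, one_pos, one_lt_two, ?_⟩
    rcases (hy.ne (show (0 : Fin 2) ≠ 1 by decide)).lt_or_gt with h | h
    · exact Or.inr fun i j hi hj => by fin_cases i <;> fin_cases j <;> simp_all
    · exact Or.inl fun i j hi hj => by fin_cases i <;> fin_cases j <;> simp_all
  | succ k hk ih =>
    obtain ⟨M, hM, hMk, hskew | hskew⟩ :=
      ih (hy.comp (Fin.succ_injective k)) (hsep.comp_strictMono Fin.strictMono_succ)
    · exact exists_isSkewSumAt_of_tail hy hsep hM hMk hskew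
    · obtain ⟨m, hm, hmk, h⟩ := exists_isSkewSumAt_of_tail (y := OrderDual.toDual ∘ y) hy
        hsep.toDual hM hMk hskew
      exact ⟨m, hm, hmk, h.symm⟩

end SkewSum

section UpperCut

variable {κ β : Type*} [LinearOrder β] {s : κ → β}

def IsUpperCut (s : κ → β) (P : Finset κ) : Prop :=
  ∀ p ∈ P, ∀ q ∉ P, s q < s p

theorem IsUpperCut.eq_of_card_eq {P Q : Finset κ} (hP : IsUpperCut s P) (hQ : IsUpperCut s Q)
    (h : #P = #Q) : P = Q := by
  by_cases hPQ : P ⊆ Q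
  · exact eq_of_subset_of_card_le hPQ h.ge
  obtain ⟨a, haP, haQ⟩ := not_subset.1 hPQ
  refine (eq_of_subset_of_card_le (fun b hbQ => ?_) h.le).symm
  by_contra hbP
  exact (hP a haP b hbP).asymm (hQ b hbQ a haQ)

theorem exists_isUpperCut [Fintype κ] (hs : Injective s) {m : ℕ}
    (hm : m ≤ Fintype.card κ) : ∃ P, IsUpperCut s P ∧ #P = m := by
  classical
  induction m with
  | zero => exact ⟨∅, fun p hp => absurd hp (notMem_empty p), card_empty⟩
  | succ m ih =>
    obtain ⟨P, hP, rfl⟩ := ih (by omega)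
    have hPc : Pᶜ.Nonempty := by
      rw [← card_pos, card_compl]
      omega
    obtain ⟨a, haP, hamax⟩ := Pᶜ.exists_max_image s hPc
    rw [mem_compl] at haP
    refine ⟨insert a P, fun p hp q hq => ?_, card_insert_of_notMem haP⟩
    rw [mem_insert, not_or] at hq
    rcases mem_insert.1 hp with rfl | hp
    · exact (hamax q (mem_compl.2 hq.2)).lt_of_ne (hs.ne hq.1)
    · exact hP p hp q hq.2

end UpperCut

section Admissible

variable {N : ℕ} {α β κ : Type*} [LinearOrder α] [LinearOrder β]

def IsAdmissible (y : Fin N → α) (s t : κ → β) (F : Fin N → κ) : Prop :=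
  (∀ i j, i < j → y j < y i → s (F j) < s (F i)) ∧
  (∀ i j, i < j → y i < y j → t (F i) < t (F j))

variable {y : Fin N → α} {s t : κ → β} {F : Fin N → κ}

theorem IsAdmissible.comp_strictMono (h : IsAdmissible y s t F) {M : ℕ} {f : Fin M → Fin N}
    (hf : StrictMono f) : IsAdmissible (y ∘ f) s t (F ∘ f) :=
  ⟨fun _ _ hij => h.1 _ _ (hf hij), fun _ _ hij => h.2 _ _ (hf hij)⟩

theorem isAdmissible_toDual_iff :
    IsAdmissible (OrderDual.toDual ∘ y) (OrderDual.toDual ∘ t) (OrderDual.toDual ∘ s) F ↔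
      IsAdmissible y s t F :=
  and_comm

variable {m l : ℕ} {P : Finset κ}

theorem IsAdmissible.append {y : Fin (m + l) → α} (hy : IsSkewSumAt y m) (hP : IsUpperCut s P)
    {F₁ : Fin m → P} {F₂ : Fin l → {p // p ∉ P}} (hF₁ : Injective F₁)
    (hF₂ : Injective F₂)
    (hA₁ : IsAdmissible (y ∘ Fin.castAdd l) (s ∘ Subtype.val) (t ∘ Subtype.val) F₁)
    (hA₂ : IsAdmissible (y ∘ Fin.natAdd m) (s ∘ Subtype.val) (t ∘ Subtype.val) F₂) :
    Injective (Fin.append (Subtype.val ∘ F₁) (Subtype.val ∘ F₂)) ∧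
      IsAdmissible y s t (Fin.append (Subtype.val ∘ F₁) (Subtype.val ∘ F₂)) := by
  have hlt : ∀ (i : Fin l) (j : Fin m), ¬ Fin.natAdd m i < Fin.castAdd l j := fun i j h => by
    simp only [Fin.lt_def, Fin.val_natAdd, Fin.val_castAdd] at h
    omega
  have hskew : ∀ (i : Fin m) (j : Fin l), y (Fin.natAdd m j) < y (Fin.castAdd l i) := fun i j =>
    hy _ _ (by simp) (by simp)
  refine ⟨Fin.append_injective_iff.2 ⟨Subtype.val_injective.comp hF₁,
    Subtype.val_injective.comp hF₂, fun i j h => (F₂ j).2 ((congrArg (· ∈ P) h).mp (F₁ i).2)⟩,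
    ?_, ?_⟩
  all_goals
    intro i j hij hyij
    induction i using Fin.addCases <;> induction j using Fin.addCases <;>
      simp only [Fin.append_left, Fin.append_right, Function.comp_apply]
  · exact hA₁.1 _ _ ((Fin.strictMono_castAdd l).lt_iff_lt.1 hij) hyij
  · exact hP _ (F₁ _).2 _ (F₂ _).2
  · exact absurd hij (hlt _ _)
  · exact hA₂.1 _ _ ((Fin.strictMono_natAdd m).lt_iff_lt.1 hij) hyij
  · exact hA₁.2 _ _ ((Fin.strictMono_castAdd l).lt_iff_lt.1 hij) hyij
  · exact absurd hyij (hskew _ _).asymm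
  · exact absurd hij (hlt _ _)
  · exact hA₂.2 _ _ ((Fin.strictMono_natAdd m).lt_iff_lt.1 hij) hyij

theorem IsAdmissible.image_castAdd [Fintype κ] [DecidableEq κ] (hκ : Fintype.card κ = m + l)
    {y : Fin (m + l) → α} (hy : IsSkewSumAt y m) {F : Fin (m + l) → κ}
    (hinj : Injective F) (hF : IsAdmissible y s t F) (hP : IsUpperCut s P)
    (hPm : #P = m) : univ.image (F ∘ Fin.castAdd l) = P := by
  have hsurj : Surjective F := ((Fintype.bijective_iff_injective_and_card F).2
    ⟨hinj, by simp [hκ]⟩).2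
  refine IsUpperCut.eq_of_card_eq (fun p hp q hq => ?_) hP ?_
  · obtain ⟨i, -, rfl⟩ := mem_image.1 hp
    obtain ⟨k, rfl⟩ := hsurj q
    induction k using Fin.addCases with
    | left k => exact absurd (mem_image_of_mem _ (mem_univ k)) hq
    | right k =>
      refine hF.1 _ _ ?_ (hy _ _ (by simp) (by simp))
      simp only [Fin.lt_def, Fin.val_castAdd, Fin.val_natAdd]
      omega
  · rw [card_image_of_injective _ (hinj.comp (Fin.castAdd_injective m l)), card_univ,
      Fintype.card_fin, hPm]

theorem existsUnique_isAdmissible_of_isSkewSumAt [Fintype κ] (hκ : Fintype.card κ = m + l)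
    {y : Fin (m + l) → α} (hy : IsSkewSumAt y m) (hP : IsUpperCut s P) (hPm : #P = m)
    (h₁ : ∃! F : Fin m → P, Injective F ∧
      IsAdmissible (y ∘ Fin.castAdd l) (s ∘ Subtype.val) (t ∘ Subtype.val) F)
    (h₂ : ∃! F : Fin l → {p // p ∉ P}, Injective F ∧
      IsAdmissible (y ∘ Fin.natAdd m) (s ∘ Subtype.val) (t ∘ Subtype.val) F) :
    ∃! F : Fin (m + l) → κ, Injective F ∧ IsAdmissible y s t F := by
  classical
  obtain ⟨F₁, ⟨hF₁, hA₁⟩, hu₁⟩ := h₁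
  obtain ⟨F₂, ⟨hF₂, hA₂⟩, hu₂⟩ := h₂
  refine ⟨_, IsAdmissible.append hy hP hF₁ hF₂ hA₁ hA₂, fun F ⟨hF, hA⟩ => ?_⟩
  have himage := hA.image_castAdd hκ hy hF hP hPm
  have hin : ∀ i, F (Fin.castAdd l i) ∈ P := fun i =>
    himage ▸ mem_image_of_mem _ (mem_univ i)
  have hout : ∀ j, F (Fin.natAdd m j) ∉ P := fun j h => by
    obtain ⟨i, -, hi⟩ := mem_image.1 (himage ▸ h)
    have := congrArg Fin.val (hF hi)
    simp only [Fin.val_castAdd, Fin.val_natAdd] at this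
    omega
  have e₁ := hu₁ (fun i => ⟨F (Fin.castAdd l i), hin i⟩)
    ⟨fun i j h => Fin.castAdd_injective _ _ (hF (congrArg Subtype.val h)),
      hA.comp_strictMono (Fin.strictMono_castAdd l)⟩
  have e₂ := hu₂ (fun j => ⟨F (Fin.natAdd m j), hout j⟩)
    ⟨fun i j h => Fin.natAdd_injective _ _ (hF (congrArg Subtype.val h)),
      hA.comp_strictMono (Fin.strictMono_natAdd m)⟩
  funext k
  induction k using Fin.addCases with
  | left i => simp [← e₁]
  | right j => simp [← e₂]

theorem existsUnique_isAdmissible [Fintype κ] (hκ : Fintype.card κ = N) (hy : Injective y)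
    (hsep : IsSeparableSeq y) (hs : Injective s) (ht : Injective t) :
    ∃! F : Fin N → κ, Injective F ∧ IsAdmissible y s t F := by
  induction N using Nat.strong_induction_on generalizing κ α β with
  | _ N ih =>
  rcases lt_or_ge N 2 with hN | hN
  · have : Subsingleton κ := Fintype.card_le_one_iff_subsingleton.1 (by omega)
    have hlt : ∀ i j : Fin N, ¬ i < j := fun i j h => by
      rw [Fin.lt_def] at h
      omega
    refine ⟨(Fintype.equivFinOfCardEq hκ).symm, ⟨Equiv.injective _, ?_⟩, fun F _ => ?_⟩
    · exact ⟨fun i j h => absurd h (hlt i j), fun i j h => absurd h (hlt i j)⟩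
    · exact Subsingleton.elim _ _
  obtain ⟨m, hm, hmN, hskew⟩ := hsep.exists_isSkewSumAt hN hy
  wlog hdesc : IsSkewSumAt y m generalizing α β y s t
  · have := this (y := OrderDual.toDual ∘ y) (s := OrderDual.toDual ∘ t)
      (t := OrderDual.toDual ∘ s) hy hsep.toDual ht hs hskew.symm (hskew.resolve_left hdesc)
    simpa only [isAdmissible_toDual_iff] using this
  classical
  obtain ⟨l, rfl⟩ := Nat.exists_eq_add_of_le hmN.le
  obtain ⟨P, hP, hPm⟩ := exists_isUpperCut hs (m := m) (by omega)
  refine existsUnique_isAdmissible_of_isSkewSumAt hκ hdesc hP hPm ?_ ?_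
  · exact ih m (by omega) (by simp [hPm]) (hy.comp (Fin.castAdd_injective m l))
      (hsep.comp_strictMono (Fin.strictMono_castAdd l)) (hs.comp Subtype.val_injective)
      (ht.comp Subtype.val_injective)
  · refine ih l (by omega) ?_ (hy.comp (Fin.natAdd_injective l m))
      (hsep.comp_strictMono (Fin.strictMono_natAdd m)) (hs.comp Subtype.val_injective)
      (ht.comp Subtype.val_injective)
    rw [Fintype.card_subtype_compl, Fintype.card_coe, hκ, hPm]
    omega

end Admissible

theorem isAdmissible_inv_iff {π v w : Perm (Fin n)} :
    IsAdmissible ⇑π⁻¹ id ⇑w⁻¹ ⇑v⁻¹ ↔ wle π v ∧ wle (v * w) π := by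
  rw [IsAdmissible, wle_iff, wle_iff']
  simp only [mul_inv_rev, Perm.mul_apply, id]

/-- For separable `π ∈ S_n`, the map
`φ' : Λ_π × V_π → S_n`, `φ'(u, v) = v⁻¹u`, is a bijection. -/
theorem bijective_inv_mul' (n : ℕ) (π : Equiv.Perm (Fin n)) (hsep : IsSeparable π) :
    Function.Bijective
      (fun p : {u : Equiv.Perm (Fin n) // wle u π} × {v : Equiv.Perm (Fin n) // wle π v} =>
        (p.2.val)⁻¹ * p.1.val) := by
  have key (w : Perm (Fin n)) :
      ∃! F : Fin n → Fin n, Injective F ∧ IsAdmissible ⇑π⁻¹ id ⇑w⁻¹ F :=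
    existsUnique_isAdmissible (Fintype.card_fin n) π⁻¹.injective hsep.inv injective_id
      w⁻¹.injective
  constructor
  · rintro ⟨⟨u, hu⟩, ⟨v, hv⟩⟩ ⟨⟨u', hu'⟩, ⟨v', hv'⟩⟩ (h : v⁻¹ * u = v'⁻¹ * u')
    have hA : IsAdmissible ⇑π⁻¹ id ⇑(v⁻¹ * u)⁻¹ ⇑v⁻¹ :=
      isAdmissible_inv_iff.2 ⟨hv, by simpa using hu⟩
    have hA' : IsAdmissible ⇑π⁻¹ id ⇑(v⁻¹ * u)⁻¹ ⇑v'⁻¹ :=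
      isAdmissible_inv_iff.2 ⟨hv', by simpa [h] using hu'⟩
    obtain rfl : v = v' := inv_injective <| DFunLike.coe_injective <|
      (key _).unique ⟨v⁻¹.injective, hA⟩ ⟨v'⁻¹.injective, hA'⟩
    obtain rfl : u = u' := mul_left_cancel h
    rfl
  · intro w
    obtain ⟨F, ⟨hF, hA⟩, -⟩ := key w
    set v : Perm (Fin n) := (Equiv.ofBijective F hF.bijective_of_finite)⁻¹
    have hvF : ⇑v⁻¹ = F := by simp [v]
    obtain ⟨hv, hu⟩ := isAdmissible_inv_iff.1 (hvF ▸ hA)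
    exact ⟨(⟨v * w, hu⟩, ⟨v, hv⟩), inv_mul_cancel_left v w⟩

end SepPerm
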